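/- For all $x \in (0,1)$, the function $g(x) = 3\mathrm{E}(x) - (2-x)\mathrm{K}(x) - (1-x)\frac{\mathrm{K}^2(x)}{\mathrm{E}(x)}$ is negative, where $\mathrm{K}, \mathrm{E}$ are complete elliptic integrals of the first and second kind. -/

import Mathlib

open Real

/-- The complete elliptic integral of the first kind with parameter `x`. -/
noncomputable def ellipticK (x : ℝ) : ℝ :=
  ∫ φ in (0:ℝ)..(π/2), 1 / Real.sqrt (1 - x * Real.sin φ ^ 2)

/-- The complete elliptic integral of the second kind with parameter `x`. -/
noncomputable def ellipticE (x : ℝ) : ℝ :=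
  ∫ φ in (0:ℝ)..(π/2), Real.sqrt (1 - x * Real.sin φ ^ 2)

/-!
Write `y = √(1 - x)`. Since `E > 0`, `g < 0` means `q(E) < 0` for the convex quadratic
`q(e) = 3e² - (1 + y²)Ke - y²K²`; as `q(0) < 0` and `q(((1 + y)/2)² K) = -(1 - y)⁴K²/16 ≤ 0`,
it suffices that `E < ((1 + y)/2)² K`, i.e. `ψ := E - ((1 + y)/2)² K < 0`.
Differentiating under the integral sign gives Legendre's formulas
`E' = (E - K)/(2x)`, `K' = (E/(1 - x) - K)/(2x)`, hence the linear differential equation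
`8x y² ψ' = -(1 - y)(1 + 3y) ψ - (1 - y)⁴ K / 4`. So `ψ' < 0` wherever `ψ ≥ 0`, and `ψ(0) = 0`
forces `ψ < 0` on `(0, 1)`.
-/

open MeasureTheory Set Filter
open scoped Topology

theorem lt_zero_of_tendsto_nhdsGT_of_deriv_neg {f : ℝ → ℝ} {a b : ℝ}
    (hf : ∀ x ∈ Ioo a b, DifferentiableAt ℝ f x)
    (hf' : ∀ x ∈ Ioo a b, 0 ≤ f x → deriv f x < 0)
    (hlim : Tendsto f (𝓝[>] a) (𝓝 0)) :
    ∀ x ∈ Ioo a b, f x < 0 := by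
  have hle : ∀ x ∈ Ioo a b, f x ≤ 0 := by
    intro x hx
    refine le_of_forall_pos_le_add fun ε hε => (zero_add ε).symm ▸ ?_
    obtain ⟨c, hfc, hc⟩ :=
      ((hlim.eventually (gt_mem_nhds hε)).and (Ioo_mem_nhdsGT hx.1)).exists
    have hsub : Icc c x ⊆ Ioo a b := Icc_subset_Ioo hc.1 hx.2
    refine image_le_of_deriv_right_lt_deriv_boundary (B := fun _ => ε) (B' := 0)
      (fun y hy => (hf y (hsub hy)).continuousAt.continuousWithinAt)
      (fun y hy => (hf y (hsub (Ico_subset_Icc_self hy))).hasDerivAt.hasDerivWithinAt)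
      hfc.le (fun _ => hasDerivAt_const _ _)
      (fun y hy hfy => hf' y (hsub (Ico_subset_Icc_self hy)) (hfy ▸ hε.le))
      (right_mem_Icc.2 hc.2.le)
  intro x hx
  refine (hle x hx).lt_of_ne fun hfx => (hf' x hx hfx.ge).ne ?_
  refine IsLocalMax.deriv_eq_zero (eventually_of_mem (Ioo_mem_nhds hx.1 hx.2) fun y hy => ?_)
  exact hfx ▸ hle y hy

lemma one_sub_mul_mem_Icc {x z s : ℝ} (hz : dist z x < (1 - x) / 2) (hs0 : 0 ≤ s)
    (hs1 : s ≤ 1) : 1 - z * s ∈ Icc (min 1 ((1 - x) / 2)) (1 + |x| + (1 - x) / 2) := by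
  rw [Real.dist_eq, abs_lt] at hz
  constructor
  · rcases le_or_gt z 0 with h | h
    · exact (min_le_left _ _).trans (by nlinarith)
    · exact (min_le_right _ _).trans (by nlinarith)
  · nlinarith [le_abs_self x, neg_abs_le x]

theorem hasDerivAt_integral_comp_one_sub_mul {h h' s : ℝ → ℝ} {a b x : ℝ}
    (hh : ∀ u, 0 < u → HasDerivAt h (h' u) u) (hh' : ContinuousOn h' (Ioi 0))
    (hs : Continuous s) (hs0 : ∀ t, 0 ≤ s t) (hs1 : ∀ t, s t ≤ 1) (hx : x < 1) :
    HasDerivAt (fun y => ∫ t in a..b, h (1 - y * s t))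
      (∫ t in a..b, h' (1 - x * s t) * -s t) x := by
  set r := (1 - x) / 2
  have hr : 0 < r := by simp only [r]; linarith
  set C := Icc (min 1 r) (1 + |x| + r)
  have hC : C ⊆ Ioi 0 := fun u hu => (lt_min one_pos hr).trans_le hu.1
  have hmem : ∀ z ∈ Metric.ball x r, ∀ t, 1 - z * s t ∈ C :=
    fun z hz t => one_sub_mul_mem_Icc hz (hs0 t) (hs1 t)
  have hcomp : ∀ z ∈ Metric.ball x r, Continuous fun t => h (1 - z * s t) := fun z hz =>
    (HasDerivAt.continuousOn hh).comp_continuous (by fun_prop) fun t => hC (hmem z hz t)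
  obtain ⟨M, hM⟩ := isCompact_Icc.exists_bound_of_continuousOn (hh'.mono hC)
  refine (intervalIntegral.hasDerivAt_integral_of_dominated_loc_of_deriv_le
    (μ := volume) (F := fun y t => h (1 - y * s t))
    (F' := fun y t => h' (1 - y * s t) * -s t) (bound := fun _ => M)
    (Metric.ball_mem_nhds x hr) ?_ ?_ ?_ ?_ intervalIntegrable_const ?_).2
  · exact eventually_of_mem (Metric.ball_mem_nhds x hr) fun z hz =>
      (hcomp z hz).aestronglyMeasurable
  · exact (hcomp x (Metric.mem_ball_self hr)).intervalIntegrable _ _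
  · exact ((hh'.comp_continuous (by fun_prop) fun t =>
      hC (hmem x (Metric.mem_ball_self hr) t)).mul hs.neg).aestronglyMeasurable
  · refine ae_of_all _ fun t _ z hz => ?_
    rw [norm_mul, norm_neg, Real.norm_of_nonneg (hs0 t)]
    nlinarith [hM _ (hmem z hz t), norm_nonneg (h' (1 - z * s t)), hs0 t, hs1 t]
  · refine ae_of_all _ fun t _ z hz => ?_
    have hlin : HasDerivAt (fun y => 1 - y * s t) (-s t) z := by
      simpa using ((hasDerivAt_id z).mul_const (s t)).const_sub 1
    exact (hh _ (hC (hmem z hz t))).comp z hlin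

section Elliptic

variable {x : ℝ}

lemma one_sub_mul_sin_sq_pos (hx : x < 1) (t : ℝ) : 0 < 1 - x * sin t ^ 2 := by
  rcases le_or_gt x 0 with h | h
  · nlinarith [sq_nonneg (sin t)]
  · nlinarith [sin_sq_le_one t]

lemma continuous_one_div_sqrt_one_sub_mul_sin_sq (hx : x < 1) :
    Continuous fun t => 1 / √(1 - x * sin t ^ 2) :=
  continuous_const.div (by fun_prop) fun t => (sqrt_pos.2 (one_sub_mul_sin_sq_pos hx t)).ne'

lemma continuous_one_div_sqrt_mul_one_sub_mul_sin_sq (hx : x < 1) :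
    Continuous fun t => 1 / (√(1 - x * sin t ^ 2) * (1 - x * sin t ^ 2)) :=
  continuous_const.div (by fun_prop) fun t =>
    have hu := one_sub_mul_sin_sq_pos hx t
    (mul_pos (sqrt_pos.2 hu) hu).ne'

lemma ellipticE_pos (hx : x < 1) : 0 < ellipticE x :=
  intervalIntegral.intervalIntegral_pos_of_pos_on
    ((by fun_prop : Continuous fun t => √(1 - x * sin t ^ 2)).intervalIntegrable _ _)
    (fun t _ => sqrt_pos.2 (one_sub_mul_sin_sq_pos hx t)) (by positivity)

lemma ellipticK_pos (hx : x < 1) : 0 < ellipticK x :=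
  intervalIntegral.intervalIntegral_pos_of_pos_on
    ((continuous_one_div_sqrt_one_sub_mul_sin_sq hx).intervalIntegrable _ _)
    (fun t _ => one_div_pos.2 (sqrt_pos.2 (one_sub_mul_sin_sq_pos hx t))) (by positivity)

lemma hasDerivAt_ellipticE_integral (hx : x < 1) :
    HasDerivAt ellipticE
      (∫ t in (0:ℝ)..π/2, 1 / (2 * √(1 - x * sin t ^ 2)) * -sin t ^ 2) x :=
  hasDerivAt_integral_comp_one_sub_mul (h := (√·)) (s := fun t => sin t ^ 2)
    (fun _ hu => hasDerivAt_sqrt hu.ne')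
    (continuousOn_const.div (by fun_prop) fun _ hu => by simp [(sqrt_pos.2 hu).ne'])
    (by fun_prop) (fun t => sq_nonneg _) sin_sq_le_one hx

lemma hasDerivAt_ellipticK_integral (hx : x < 1) :
    HasDerivAt ellipticK
      (∫ t in (0:ℝ)..π/2,
        -1 / (2 * (√(1 - x * sin t ^ 2) * (1 - x * sin t ^ 2))) * -sin t ^ 2) x :=
  hasDerivAt_integral_comp_one_sub_mul (h := fun u => 1 / √u)
    (h' := fun u => -1 / (2 * (√u * u))) (s := fun t => sin t ^ 2)
    (fun u hu => ((hasDerivAt_const u 1).div (hasDerivAt_sqrt hu.ne')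
      (sqrt_pos.2 hu).ne').congr_deriv (by field_simp; rw [sq_sqrt hu.le]; ring))
    (continuousOn_const.div (by fun_prop) fun _ hu =>
      by simp [(sqrt_pos.2 hu).ne', (mem_Ioi.1 hu).ne'])
    (by fun_prop) (fun t => sq_nonneg _) sin_sq_le_one hx

lemma hasDerivAt_mul_sin_mul_cos_div_sqrt (hx : x < 1) (t : ℝ) :
    HasDerivAt (fun t => x * (sin t * cos t) / √(1 - x * sin t ^ 2))
      (√(1 - x * sin t ^ 2)
        - (1 - x) * (1 / (√(1 - x * sin t ^ 2) * (1 - x * sin t ^ 2)))) t := by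
  have hu := one_sub_mul_sin_sq_pos hx t
  have hsin : HasDerivAt (fun t => 1 - x * sin t ^ 2) (-(x * (2 * sin t * cos t))) t := by
    simpa [mul_comm, mul_assoc, mul_left_comm] using
      (((hasDerivAt_sin t).pow 2).const_mul x).const_sub 1
  refine ((((hasDerivAt_sin t).mul (hasDerivAt_cos t)).const_mul x).div (hsin.sqrt hu.ne')
    (sqrt_pos.2 hu).ne').congr_deriv ?_
  have hw := sq_sqrt hu.le
  have hpy := sin_sq_add_cos_sq t
  field_simp
  rw [hw, Pi.mul_apply]
  linear_combination x * (1 - x * sin t ^ 2) * hpy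

lemma integral_one_div_sqrt_mul_one_sub_mul_sin_sq (hx : x < 1) :
    ∫ t in (0:ℝ)..π/2, 1 / (√(1 - x * sin t ^ 2) * (1 - x * sin t ^ 2))
      = ellipticE x / (1 - x) := by
  have hE := (by fun_prop : Continuous fun t => √(1 - x * sin t ^ 2)).intervalIntegrable
    (μ := volume) 0 (π/2)
  have hJ := (continuous_one_div_sqrt_mul_one_sub_mul_sin_sq hx).intervalIntegrable
    (μ := volume) 0 (π/2)
  have h := intervalIntegral.integral_eq_sub_of_hasDerivAt
    (fun t _ => hasDerivAt_mul_sin_mul_cos_div_sqrt hx t) (hE.sub (hJ.const_mul _))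
  rw [intervalIntegral.integral_sub hE (hJ.const_mul _), intervalIntegral.integral_const_mul] at h
  simp only [cos_pi_div_two, sin_zero, mul_zero, zero_mul, zero_div, sub_self] at h
  rw [eq_div_iff (sub_pos.2 hx).ne', ellipticE]
  linarith

lemma hasDerivAt_ellipticE (hx : x ∈ Ioo 0 1) :
    HasDerivAt ellipticE ((ellipticE x - ellipticK x) / (2 * x)) x := by
  have hpt (t : ℝ) : 1 / (2 * √(1 - x * sin t ^ 2)) * -sin t ^ 2
      = (√(1 - x * sin t ^ 2) - 1 / √(1 - x * sin t ^ 2)) / (2 * x) := by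
    have hu := one_sub_mul_sin_sq_pos hx.2 t
    have := (sqrt_pos.2 hu).ne'
    have := hx.1.ne'
    field_simp
    rw [sq_sqrt hu.le]
    ring
  have h := hasDerivAt_ellipticE_integral hx.2
  simp_rw [hpt] at h
  rwa [intervalIntegral.integral_div, intervalIntegral.integral_sub
    ((by fun_prop : Continuous fun t => √(1 - x * sin t ^ 2)).intervalIntegrable _ _)
    ((continuous_one_div_sqrt_one_sub_mul_sin_sq hx.2).intervalIntegrable _ _)] at h

lemma hasDerivAt_ellipticK (hx : x ∈ Ioo 0 1) :
    HasDerivAt ellipticK ((ellipticE x / (1 - x) - ellipticK x) / (2 * x)) x := by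
  have hpt (t : ℝ) : -1 / (2 * (√(1 - x * sin t ^ 2) * (1 - x * sin t ^ 2))) * -sin t ^ 2
      = (1 / (√(1 - x * sin t ^ 2) * (1 - x * sin t ^ 2)) - 1 / √(1 - x * sin t ^ 2))
        / (2 * x) := by
    have hu := one_sub_mul_sin_sq_pos hx.2 t
    have := (sqrt_pos.2 hu).ne'
    have := hx.1.ne'
    field_simp
    ring
  have h := hasDerivAt_ellipticK_integral hx.2
  simp_rw [hpt] at h
  rwa [intervalIntegral.integral_div, intervalIntegral.integral_sub
    ((continuous_one_div_sqrt_mul_one_sub_mul_sin_sq hx.2).intervalIntegrable _ _)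
    ((continuous_one_div_sqrt_one_sub_mul_sin_sq hx.2).intervalIntegrable _ _),
    integral_one_div_sqrt_mul_one_sub_mul_sin_sq hx.2] at h

noncomputable def ellipticPsi (x : ℝ) : ℝ :=
  ellipticE x - ((1 + √(1 - x)) / 2) ^ 2 * ellipticK x

lemma tendsto_ellipticPsi_nhdsGT_zero : Tendsto ellipticPsi (𝓝[>] 0) (𝓝 0) := by
  have hcont : ContinuousAt ellipticPsi 0 :=
    (hasDerivAt_ellipticE_integral one_pos).continuousAt.sub
      (((continuous_const.add (by fun_prop)).div_const 2).pow 2 |>.continuousAt.mul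
        (hasDerivAt_ellipticK_integral one_pos).continuousAt)
  have hzero : ellipticPsi 0 = 0 := by simp [ellipticPsi, ellipticE, ellipticK]
  simpa only [hzero] using hcont.tendsto.mono_left (nhdsWithin_le_nhds (s := Ioi 0))

lemma hasDerivAt_ellipticPsi (hx : x ∈ Ioo 0 1) :
    HasDerivAt ellipticPsi
      (-((1 - √(1 - x)) * (1 + 3 * √(1 - x)) * ellipticPsi x
        + (1 - √(1 - x)) ^ 4 / 4 * ellipticK x) / (8 * x * (1 - x))) x := by
  have h1x : 0 < 1 - x := sub_pos.2 hx.2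
  have hsqrt : HasDerivAt (fun x => √(1 - x)) (-1 / (2 * √(1 - x))) x := by
    simpa using ((hasDerivAt_id x).const_sub 1).sqrt h1x.ne'
  refine ((hasDerivAt_ellipticE hx).sub
    ((((hsqrt.const_add 1).div_const 2).fun_pow 2).mul (hasDerivAt_ellipticK hx))).congr_deriv ?_
  have hy := sq_sqrt h1x.le
  have hy0 := (sqrt_pos.2 h1x).ne'
  have hx0 := hx.1.ne'
  unfold ellipticPsi
  generalize √(1 - x) = y at *
  obtain rfl : x = 1 - y ^ 2 := by linarith
  field_simp
  ring

lemma ellipticPsi_neg (hx : x ∈ Ioo 0 1) : ellipticPsi x < 0 := by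
  refine lt_zero_of_tendsto_nhdsGT_of_deriv_neg
    (fun y hy => (hasDerivAt_ellipticPsi hy).differentiableAt) (fun y hy hψ => ?_)
    tendsto_ellipticPsi_nhdsGT_zero x hx
  have h1y : 0 < 1 - y := sub_pos.2 hy.2
  have hs : 0 < 1 - √(1 - y) := sub_pos.2 ((sqrt_lt' one_pos).2 (by linarith [hy.1]))
  rw [(hasDerivAt_ellipticPsi hy).deriv, neg_div, neg_neg_iff_pos]
  have := ellipticK_pos hy.2
  have := hy.1
  positivity

end Elliptic

lemma three_mul_sub_sub_sq_div_neg {E K y : ℝ} (hE : 0 < E) (hK : 0 < K) (hy : 0 < y)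
    (h : E < ((1 + y) / 2) ^ 2 * K) : 3 * E - (1 + y ^ 2) * K - y ^ 2 * K ^ 2 / E < 0 := by
  rw [sub_div' hE.ne', div_neg_iff]
  right
  refine ⟨?_, hE⟩
  set m := ((1 + y) / 2) ^ 2 * K
  have hm : 0 < m := by positivity
  have key : m * ((3 * E - (1 + y ^ 2) * K) * E - y ^ 2 * K ^ 2)
      = -(3 * m * E + y ^ 2 * K ^ 2) * (m - E) - E * (1 - y) ^ 4 * K ^ 2 / 16 := by
    simp only [m]; ring
  refine neg_of_mul_neg_right (key ▸ ?_) hm.le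
  have : 0 < (3 * m * E + y ^ 2 * K ^ 2) * (m - E) := mul_pos (by positivity) (sub_pos.2 h)
  have : 0 ≤ E * (1 - y) ^ 4 * K ^ 2 / 16 := by positivity
  linarith

theorem elliptic_g_negative (x : ℝ) (hx : x ∈ Set.Ioo (0:ℝ) 1) :
    3 * ellipticE x - (2 - x) * ellipticK x
      - (1 - x) * (ellipticK x)^2 / ellipticE x < 0 := by
  have hy := sq_sqrt (sub_pos.2 hx.2).le
  have hψ := ellipticPsi_neg hx
  rw [ellipticPsi, sub_neg] at hψ
  have h := three_mul_sub_sub_sq_div_neg (ellipticE_pos hx.2) (ellipticK_pos hx.2)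
    (sqrt_pos.2 (sub_pos.2 hx.2)) hψ
  rwa [hy, show 1 + (1 - x) = 2 - x by ring] at h
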